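/- arXiv:math/0001084 — 3 statements merged into one kernel-verified Lean document; each statement's English description precedes it below -/
import Mathlib

section
/- For positive integers k, l and integer h with 0 ≤ h < min(k,l), the number of lattice points (u,v) in the rectangle {0,...,k-1}×{0,...,l-1} reachable from (0,h) by moving any number of steps south-west or north-west equals ⌊(h/2 + 1)²⌋, i.e., equals (h/2+1)² if h is even and ((h+1)/2)·((h+3)/2) if h is odd. -/
/-- σ_{k,l}(h): number of points (u,v) with rows u ∈ [0,l), columns v ∈ [0,k),
reachable from (0,h): 0 ≤ u ≤ h−v and u ≡ h−v (mod 2). -/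
def sigmaF (k l : ℕ) (h : ℤ) : ℕ :=
  ((Finset.range l ×ˢ Finset.range k).filter
    (fun p => (p.1 : ℤ) ≤ h - p.2 ∧ (p.1 : ℤ) % 2 = (h - p.2) % 2)).card

/-!
Row `u` of the rectangle contains a reachable point only for `u ≤ h`, and then exactly the
`(h - u) / 2 + 1` columns `v ≤ h - u` of the parity of `h - u`. Since `h < min k l`, neither
bound of the rectangle cuts anything off, so `σ_{k,l}(h) = ∑_{u ≤ h} ((h - u) / 2 + 1)`, and this
sum is `⌊(h + 2)² / 4⌋`.
-/

open Finset

lemma card_filter_le_and_mod_two_eq {m n : ℕ} (hmn : m < n) :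
    #{v ∈ range n | v ≤ m ∧ v % 2 = m % 2} = m / 2 + 1 := by
  rw [← card_range (m / 2 + 1)]
  refine card_nbij' (fun v => (m - v) / 2) (fun j => m - 2 * j) ?_ ?_ ?_ ?_ <;>
  · intro a ha
    simp only [mem_coe, mem_filter, mem_range] at ha ⊢
    omega

lemma sum_range_succ_sub_div_two_add_one (h : ℕ) :
    ∑ u ∈ range (h + 1), ((h - u) / 2 + 1) = (h + 2) ^ 2 / 4 := by
  induction h with
  | zero => simp
  | succ h ih =>
    rw [sum_range_succ', Nat.sub_zero]
    simp only [Nat.succ_sub_succ]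
    rw [ih]
    obtain ⟨m, rfl | rfl⟩ := Nat.even_or_odd' h
    · have e₁ : (2 * m + 1 + 2) ^ 2 = 4 * (m * m) + 12 * m + 9 := by ring
      have e₂ : (2 * m + 2) ^ 2 = 4 * (m * m) + 8 * m + 4 := by ring
      rw [e₁, e₂]
      omega
    · have e₁ : (2 * m + 1 + 1 + 2) ^ 2 = 4 * (m * m) + 16 * m + 16 := by ring
      have e₂ : (2 * m + 1 + 2) ^ 2 = 4 * (m * m) + 12 * m + 9 := by ring
      rw [e₁, e₂]
      omega

lemma card_reachable_row {h k : ℕ} (hk : h < k) (u : ℕ) :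
    #((range k).filter fun v : ℕ => (u : ℤ) ≤ h - v ∧ (u : ℤ) % 2 = (h - v) % 2) =
      if u ≤ h then (h - u) / 2 + 1 else 0 := by
  split_ifs with hu
  · rw [← card_filter_le_and_mod_two_eq (show h - u < k by omega)]
    congr 1
    refine filter_congr fun v _ => ?_
    omega
  · rw [card_eq_zero, filter_eq_empty_iff]
    omega

lemma sigmaF_eq_sum {h k l : ℕ} (hk : h < k) (hl : h < l) :
    sigmaF k l h = ∑ u ∈ range (h + 1), ((h - u) / 2 + 1) := by
  have rows : {u ∈ range l | u ≤ h} = range (h + 1) := by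
    ext u
    simp only [mem_filter, mem_range]
    omega
  rw [sigmaF, card_filter, sum_product]
  simp only [← card_filter]
  rw [sum_congr rfl fun u _ => card_reachable_row hk u, ← sum_filter, rows]

lemma sq_add_two_div_four_of_even {h : ℕ} (he : Even h) : (h + 2) ^ 2 / 4 = (h / 2 + 1) ^ 2 := by
  obtain ⟨m, rfl⟩ := he
  rw [show (m + m + 2) ^ 2 = 4 * (m + 1) ^ 2 by ring, show (m + m) / 2 = m by omega]
  exact Nat.mul_div_cancel_left _ (by norm_num)

lemma sq_add_two_div_four_of_odd {h : ℕ} (ho : Odd h) :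
    (h + 2) ^ 2 / 4 = (h + 1) / 2 * ((h + 3) / 2) := by
  obtain ⟨m, rfl⟩ := ho
  rw [show (2 * m + 1 + 2) ^ 2 = 4 * ((m + 1) * (m + 2)) + 1 by ring,
    show (2 * m + 1 + 1) / 2 = m + 1 by omega, show (2 * m + 1 + 3) / 2 = m + 2 by omega]
  omega

theorem stmt0_general (k l : ℕ) (h : ℕ) (hh : h < min k l) :
    sigmaF k l (h : ℤ) = (h + 2) ^ 2 / 4 ∧
    (Even h → sigmaF k l (h : ℤ) = (h / 2 + 1) ^ 2) ∧
    (¬ Even h → sigmaF k l (h : ℤ) = ((h + 1) / 2) * ((h + 3) / 2)) := by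
  have hσ : sigmaF k l h = (h + 2) ^ 2 / 4 := by
    rw [sigmaF_eq_sum (lt_of_lt_of_le hh (min_le_left k l)) (lt_of_lt_of_le hh (min_le_right k l)),
      sum_range_succ_sub_div_two_add_one]
  refine ⟨hσ, fun he => ?_, fun ho => ?_⟩
  · rw [hσ, sq_add_two_div_four_of_even he]
  · rw [hσ, sq_add_two_div_four_of_odd (Nat.not_even_iff_odd.mp ho)]

theorem stmt0 (k l : ℕ) (hk : 0 < k) (hl : 0 < l) (h : ℕ) (hh : h < min k l) :
    sigmaF k l (h : ℤ) = (h + 2) ^ 2 / 4 ∧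
    (Even h → sigmaF k l (h : ℤ) = (h / 2 + 1) ^ 2) ∧
    (¬ Even h → sigmaF k l (h : ℤ) = ((h + 1) / 2) * ((h + 3) / 2)) :=
  stmt0_general k l h hh
end

section
/- For positive integers k, l and integer h with min(k,l) ≤ h < max(k,l), one has σ_{k,l}(h) = σ_{k,l}(s) + ((h−s)/2)·min(k,l), where s = min(k,l)−2 if h−min(k,l) is even and s = min(k,l)−1 otherwise. -/
/-!
Read `σ_{k,l}(h)` as the number of cells `(u, v)` of the rectangle with `u + v ≤ h` and
`u + v ≡ h (mod 2)`. Passing from `h - 2` to `h` adds exactly the cells of the antidiagonal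
`u + v = h`, and for `min k l ≤ h < max k l` that antidiagonal crosses the rectangle in
`min k l` cells. The starting value `s` has the parity of `h` and is at least `min k l - 2`,
so each of the `(h - s) / 2` steps from `s` up to `h` adds `min k l`.
-/

open Finset

lemma card_filter_add_eq_swap (k l n : ℕ) :
    #{p ∈ range l ×ˢ range k | p.1 + p.2 = n} = #{p ∈ range k ×ˢ range l | p.1 + p.2 = n} :=
  card_nbij' Prod.swap Prod.swap (fun p hp => by simp at hp ⊢; omega)
    (fun p hp => by simp at hp ⊢; omega) (fun p _ => rfl) (fun p _ => rfl)

lemma card_filter_add_eq_of_le_of_lt {k l n : ℕ} (hkn : k ≤ n) (hnl : n < l) :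
    #{p ∈ range l ×ˢ range k | p.1 + p.2 = n} = k :=
  (card_nbij' Prod.snd (fun v => (n - v, v)) (fun p hp => by simp at hp ⊢; omega)
    (fun v hv => by simp at hv ⊢; omega)
    (fun p hp => Prod.ext (show n - p.2 = p.1 by simp at hp; omega) rfl) (fun v _ => rfl)).trans (card_range k)

lemma card_filter_add_eq_min {k l n : ℕ} (h1 : min k l ≤ n) (h2 : n < max k l) :
    #{p ∈ range l ×ˢ range k | p.1 + p.2 = n} = min k l := by
  rcases le_total k l with hkl | hlk
  · rw [min_eq_left hkl]
    exact card_filter_add_eq_of_le_of_lt (by omega) (by omega)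
  · rw [min_eq_right hlk, card_filter_add_eq_swap]
    exact card_filter_add_eq_of_le_of_lt (by omega) (by omega)

lemma sigmaF_eq_sigmaF_sub_two_add (k l : ℕ) (h : ℤ) :
    sigmaF k l h = sigmaF k l (h - 2) + #{p ∈ range l ×ˢ range k | (p.1 + p.2 : ℤ) = h} := by
  unfold sigmaF
  rw [← card_union_of_disjoint (disjoint_filter.2 fun p _ hp hq => by omega), ← filter_or]
  exact congrArg card (filter_congr fun p _ => by omega)

lemma sigmaF_add_two_mul (k l : ℕ) {s : ℤ} (hs : min (k : ℤ) l - 2 ≤ s) (n : ℕ)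
    (hn : s + 2 * n < max (k : ℤ) l) :
    sigmaF k l (s + 2 * n) = sigmaF k l s + n * min k l := by
  induction n with
  | zero => simp
  | succ n ih =>
    obtain ⟨m, hm⟩ : ∃ m : ℕ, s + 2 * (n + 1 : ℕ) = m := ⟨(s + 2 * (n + 1 : ℕ)).toNat, by omega⟩
    have hdiag : #{p ∈ range l ×ˢ range k | (p.1 + p.2 : ℤ) = m} = min k l := by
      simp only [← Nat.cast_add, Nat.cast_inj]
      exact card_filter_add_eq_min (by omega) (by omega)
    rw [sigmaF_eq_sigmaF_sub_two_add, hm, hdiag, ← hm,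
      show s + 2 * (n + 1 : ℕ) - 2 = s + 2 * n by push_cast; ring, ih (by omega)]
    ring

theorem stmt1_general (k l : ℕ) (h : ℤ)
    (h1 : (min k l : ℤ) ≤ h) (h2 : h < (max k l : ℤ)) :
    (sigmaF k l h : ℤ) =
      sigmaF k l (if Even (h - min k l) then (min k l : ℤ) - 2 else (min k l : ℤ) - 1) +
        ((h - (if Even (h - min k l) then (min k l : ℤ) - 2 else (min k l : ℤ) - 1)) / 2) *
          min k l := by
  set s := if Even (h - min k l) then (min k l : ℤ) - 2 else (min k l : ℤ) - 1
  have hs : (min k l : ℤ) - 2 ≤ s ∧ s ≤ h ∧ 2 ∣ h - s := by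
    by_cases hpar : Even (h - min k l) <;> simp only [s, hpar, if_true, if_false] <;>
      rw [Int.even_iff] at hpar <;> omega
  clear_value s
  obtain ⟨n, rfl⟩ : ∃ n : ℕ, h = s + 2 * n := ⟨((h - s) / 2).toNat, by omega⟩
  rw [sigmaF_add_two_mul k l hs.1 n h2, show (s + 2 * n - s) / 2 = n by omega]
  push_cast
  ring

theorem stmt1 (k l : ℕ) (hk : 0 < k) (hl : 0 < l) (h : ℤ)
    (h1 : (min k l : ℤ) ≤ h) (h2 : h < (max k l : ℤ)) :
    (sigmaF k l h : ℤ) =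
      sigmaF k l (if Even (h - min k l) then (min k l : ℤ) - 2 else (min k l : ℤ) - 1) +
        ((h - (if Even (h - min k l) then (min k l : ℤ) - 2 else (min k l : ℤ) - 1)) / 2) *
          min k l :=
  stmt1_general k l h h1 h2
end

section
/- For positive integers k, l and integer h with h ≥ max(k,l): if h is even then σ_{k,l}(h) = ⌈kl/2⌉ − σ_{k,l}(k+l−h−4), and if h is odd then σ_{k,l}(h) = ⌊kl/2⌋ − σ_{k,l}(k+l−h−4). -/
/-!
The point reflection `(u, v) ↦ (l - 1 - u, k - 1 - v)` of the rectangle maps the cells counted by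
`σ_{k,l}(k + l - h - 4)` exactly onto the cells with `u + v ≡ h (mod 2)` that are *not* counted
by `σ_{k,l}(h)`, i.e. those with `u ≥ h - v + 2`. Hence `σ_{k,l}(h) + σ_{k,l}(k + l - h - 4)` is the
size of one colour class of the `k × l` checkerboard, which is `⌈kl/2⌉` or `⌊kl/2⌋` according to
the parity of `h`.
-/

open Finset

namespace SigmaF

def parityCells (k l : ℕ) (h : ℤ) : Finset (ℕ × ℕ) :=
  (range l ×ˢ range k).filter (fun p => ((p.1 : ℤ) + p.2) % 2 = h % 2)

lemma card_filter_range_emod_two (k : ℕ) (c : ℤ) :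
    #{v ∈ range k | ((v : ℕ) : ℤ) % 2 = c % 2} = if c % 2 = 0 then (k + 1) / 2 else k / 2 := by
  induction k with
  | zero => simp
  | succ n ih =>
    rw [range_add_one, filter_insert]
    by_cases hn : (n : ℤ) % 2 = c % 2
    · rw [if_pos hn, card_insert_of_notMem (by simp), ih]
      split_ifs <;> omega
    · rw [if_neg hn, ih]
      split_ifs <;> omega

lemma sum_range_row_counts (k l : ℕ) (h : ℤ) :
    (∑ u ∈ range l, if (h - u) % 2 = 0 then (k + 1) / 2 else k / 2)
      = if h % 2 = 0 then (k * l + 1) / 2 else k * l / 2 := by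
  induction l with
  | zero => simp
  | succ n ih =>
    rw [sum_range_succ, ih, Nat.mul_succ]
    have hkn := Nat.mul_mod k n 2
    rcases Nat.mod_two_eq_zero_or_one k with hk | hk <;>
      rcases Nat.mod_two_eq_zero_or_one n with hn | hn <;>
      simp only [hk, hn] at hkn <;> split_ifs <;> omega

lemma card_parityCells (k l : ℕ) (h : ℤ) :
    #(parityCells k l h) = if h % 2 = 0 then (k * l + 1) / 2 else k * l / 2 := by
  rw [parityCells, card_filter, sum_product, ← sum_range_row_counts k l h]
  refine sum_congr rfl fun u _ => ?_
  rw [← card_filter_range_emod_two, card_filter]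
  refine sum_congr rfl fun v _ => ?_
  congr 1
  exact propext ⟨fun _ => by omega, fun _ => by omega⟩

lemma sigmaF_eq_card_filter_le (k l : ℕ) (h : ℤ) :
    sigmaF k l h = #{p ∈ parityCells k l h | (p.1 : ℤ) ≤ h - p.2} := by
  rw [sigmaF, parityCells, filter_filter]
  congr 1
  refine filter_congr fun p _ => ?_
  omega

def reflect (k l : ℕ) (p : ℕ × ℕ) : ℕ × ℕ := (l - 1 - p.1, k - 1 - p.2)

lemma sigmaF_sub_eq_card_filter_lt (k l : ℕ) (h : ℤ) :
    sigmaF k l (k + l - h - 4) = #{p ∈ parityCells k l h | h - p.2 < p.1} := by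
  apply card_nbij' (reflect k l) (reflect k l) <;> intro p hp <;>
    simp only [reflect, Prod.ext_iff, mem_coe, parityCells, mem_filter, mem_product,
      mem_range] at hp ⊢ <;> omega

theorem sigmaF_add_sigmaF_sub (k l : ℕ) (h : ℤ) :
    sigmaF k l h + sigmaF k l (k + l - h - 4) = #(parityCells k l h) := by
  rw [sigmaF_eq_card_filter_le, sigmaF_sub_eq_card_filter_lt]
  simp only [← not_le]
  exact card_filter_add_card_filter_not _

end SigmaF

open SigmaF in
theorem stmt2_general (k l : ℕ) (h : ℤ) :
    (Even h → (sigmaF k l h : ℤ) = ((k * l + 1) / 2 : ℕ) - sigmaF k l (k + l - h - 4)) ∧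
    (¬ Even h → (sigmaF k l h : ℤ) = ((k * l) / 2 : ℕ) - sigmaF k l (k + l - h - 4)) := by
  have hsum := sigmaF_add_sigmaF_sub k l h
  rw [card_parityCells] at hsum
  refine ⟨fun he => ?_, fun ho => ?_⟩
  · rw [if_pos (Int.even_iff.mp he)] at hsum
    omega
  · rw [if_neg (mt Int.even_iff.mpr ho)] at hsum
    omega

theorem stmt2 (k l : ℕ) (hk : 0 < k) (hl : 0 < l) (h : ℤ) (hh : (max k l : ℤ) ≤ h) :
    (Even h → (sigmaF k l h : ℤ) = ((k * l + 1) / 2 : ℕ) - sigmaF k l (k + l - h - 4)) ∧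
    (¬ Even h → (sigmaF k l h : ℤ) = ((k * l) / 2 : ℕ) - sigmaF k l (k + l - h - 4)) :=
  stmt2_general k l h
end
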